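/- arXiv:1509.01353 — 7 statements merged into one kernel-verified Lean document; each statement's English description precedes it below -/
import Mathlib

section
/- For all real numbers α > 2, c > 0 and ρ > 1, ∫_1^ρ (1 − exp(−c r^{−α})) r dr = (1/2) [ ρ² − 1 − ρ² exp(−c ρ^{−α}) + exp(−c) + c^{2/α} ( γ(1 − 2/α, c) − γ(1 − 2/α, c ρ^{−α}) ) ]. (This is the integral evaluation underlying the Laplace transform of the received power from near power beacons in Lemma 3, case 1 < ρ < ∞.) -/
/-!
The integrand has the antiderivative
`G r = ½ (r² - r² exp (-c r^(-α)) - c^(2/α) γ(1 - 2/α, c r^(-α)))`, so the integral is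
`G ρ - G 1`. Differentiating `r² exp (-u)` with `u = c r^(-α)` leaves a term
`α c r^(1-α) exp (-u)`, which the derivative of the γ-term cancels because
`c^(2/α) u^(-2/α) = r²`. The hypothesis `α > 2` makes `γ(1 - 2/α, ·)` integrable at `0`.
-/

/-- The lower incomplete gamma function γ(s, x) = ∫_0^x t^(s-1) e^(-t) dt. -/
noncomputable def lowerGamma (s x : ℝ) : ℝ := ∫ t in (0:ℝ)..x, t ^ (s - 1) * Real.exp (-t)

open Real

theorem hasDerivAt_lowerGamma {s x : ℝ} (hs : 0 < s) (hx : x ≠ 0) :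
    HasDerivAt (lowerGamma s) (x ^ (s - 1) * exp (-x)) x := by
  have hmeas : Measurable fun t : ℝ => t ^ (s - 1) * exp (-t) := by fun_prop
  exact intervalIntegral.integral_hasDerivAt_right
    ((intervalIntegral.intervalIntegrable_rpow' (by linarith)).mul_continuousOn (by fun_prop))
    hmeas.aestronglyMeasurable.stronglyMeasurableAtFilter
    ((continuousAt_rpow_const x (s - 1) (.inl hx)).mul (by fun_prop))

theorem rpow_div_mul_mul_rpow_neg_rpow_neg {c r : ℝ} (α p : ℝ) (hα : α ≠ 0) (hc : 0 < c)
    (hr : 0 < r) : c ^ (p / α) * (c * r ^ (-α)) ^ (-(p / α)) = r ^ p := by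
  rw [mul_rpow hc.le (rpow_nonneg hr.le _), ← rpow_mul hr.le, ← mul_assoc, ← rpow_add hc]
  field_simp
  simp

theorem hasDerivAt_lowerGamma_antiderivative {α c r : ℝ} (hα : 2 < α) (hc : 0 < c)
    (hr : 0 < r) :
    HasDerivAt (fun r => (1 / 2) * (r ^ 2 - r ^ 2 * exp (-c * r ^ (-α)) -
        c ^ (2 / α) * lowerGamma (1 - 2 / α) (c * r ^ (-α))))
      ((1 - exp (-c * r ^ (-α))) * r) r := by
  have hs : 0 < 1 - 2 / α := by
    rw [sub_pos, div_lt_one (by linarith)]; exact hα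
  have hpow := hasDerivAt_rpow_const (p := -α) (.inl hr.ne')
  have hΓ := (hasDerivAt_lowerGamma hs (mul_pos hc (rpow_pos_of_pos hr (-α))).ne').comp r
    (hpow.const_mul c)
  have hE := (hasDerivAt_exp _).comp r (hpow.const_mul (-c))
  have hr2 : HasDerivAt (fun r : ℝ => r ^ 2) (2 * r) r := by simpa using hasDerivAt_pow 2 r
  refine ((hr2.sub (hr2.mul hE)).sub (hΓ.const_mul (c ^ (2 / α)))).const_mul (1 / 2)
    |>.congr_deriv ?_
  have hkey := rpow_div_mul_mul_rpow_neg_rpow_neg α 2 (by linarith) hc hr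
  rw [rpow_two] at hkey
  rw [sub_sub_cancel_left, Function.comp_apply, neg_mul c]
  linear_combination (1 / 2 * c * α * r ^ (-α - 1) * exp (-(c * r ^ (-α)))) * hkey

theorem stmt_0 (α c ρ : ℝ) (hα : 2 < α) (hc : 0 < c) (hρ : 1 < ρ) :
    ∫ r in (1:ℝ)..ρ, (1 - Real.exp (-c * r ^ (-α))) * r =
      (1/2) * (ρ ^ 2 - 1 - ρ ^ 2 * Real.exp (-c * ρ ^ (-α)) + Real.exp (-c) +
        c ^ (2/α) * (lowerGamma (1 - 2/α) c - lowerGamma (1 - 2/α) (c * ρ ^ (-α)))) := by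
  have hpos : ∀ r ∈ Set.uIcc 1 ρ, 0 < r := fun r hr =>
    one_pos.trans_le (Set.uIcc_of_le hρ.le ▸ hr).1
  have hcont : ContinuousOn (fun r : ℝ => (1 - exp (-c * r ^ (-α))) * r) (Set.uIcc 1 ρ) :=
    fun r hr => ContinuousAt.continuousWithinAt <| by
      fun_prop (disch := exact .inl (hpos r hr).ne')
  rw [intervalIntegral.integral_eq_sub_of_hasDerivAt
    (fun r hr => hasDerivAt_lowerGamma_antiderivative hα hc (hpos r hr)) hcont.intervalIntegrable]
  simp only [one_rpow, one_pow, one_mul, mul_one]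
  ring
end

section
/- For all real numbers α > 2, c > 0 and 0 < ρ ≤ 1, ∫_ρ^1 (1 − exp(−c)) r dr + ∫_1^∞ (1 − exp(−c r^{−α})) r dr = (1/2) [ c^{2/α} γ(1 − 2/α, c) − ρ² (1 − exp(−c)) ], where the integrand of the second (improper) integral is integrable on [1, ∞). (This is the integral evaluation underlying the Laplace transform of the received power from far power beacons in Lemma 4, case 0 < ρ ≤ 1.) -/
open MeasureTheory Set Real Filter Topology intervalIntegral

section aux

variable {α c : ℝ} (hα : 2 < α) (hc : 0 < c)

include hα in
lemma aux_exp_lt : -1 < -(2/α) := by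
  rw [neg_lt_neg_iff, div_lt_one (by linarith)]; linarith

include hα in
lemma aux_II (y : ℝ) :
    IntervalIntegrable (fun t : ℝ => t ^ (-(2/α)) * Real.exp (-t)) volume 0 y :=
  (intervalIntegral.intervalIntegrable_rpow' (aux_exp_lt hα)).mul_continuousOn
    ((Real.continuous_exp.comp continuous_neg).continuousOn)

include hc in
/-- pointwise bound -/
lemma aux_bound {x : ℝ} (hx : 1 ≤ x) :
    0 ≤ (1 - Real.exp (-c * x ^ (-α))) * x ∧
    (1 - Real.exp (-c * x ^ (-α))) * x ≤ c * x ^ (1 - α) := by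
  have hx0 : (0:ℝ) < x := by linarith
  have hu0 : 0 < c * x ^ (-α) := mul_pos hc (Real.rpow_pos_of_pos hx0 _)
  have h1 : Real.exp (-c * x ^ (-α)) ≤ 1 := by
    rw [Real.exp_le_one_iff]; nlinarith
  have h2 : 1 - c * x ^ (-α) ≤ Real.exp (-c * x ^ (-α)) := by
    have := Real.add_one_le_exp (-(c * x ^ (-α)))
    rw [neg_mul]
    nlinarith [this]
  constructor
  · exact mul_nonneg (by linarith) hx0.le
  · have : (1 - Real.exp (-c * x ^ (-α))) ≤ c * x ^ (-α) := by linarith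
    have h3 : (1 - Real.exp (-c * x ^ (-α))) * x ≤ c * x ^ (-α) * x := by
      nlinarith
    calc (1 - Real.exp (-c * x ^ (-α))) * x ≤ c * x ^ (-α) * x := h3
      _ = c * x ^ (1 - α) := by
          rw [mul_assoc, ← Real.rpow_add_one hx0.ne']
          ring_nf

end aux

section aux2
variable {α c : ℝ} (hα : 2 < α) (hc : 0 < c)

include hα hc in
lemma aux_integrable :
    IntegrableOn (fun r : ℝ => (1 - Real.exp (-c * r ^ (-α))) * r) (Set.Ioi (1:ℝ)) := by
  have hmaj : IntegrableOn (fun r : ℝ => c * r ^ (1 - α)) (Set.Ioi (1:ℝ)) :=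
    (integrableOn_Ioi_rpow_of_lt (by linarith : 1 - α < -1) one_pos).const_mul c
  refine hmaj.mono' ?_ ?_
  · apply Measurable.aestronglyMeasurable
    fun_prop
  · filter_upwards [self_mem_ae_restrict measurableSet_Ioi] with x hx
    obtain ⟨h0, h1⟩ := aux_bound hc (le_of_lt hx)
    rw [Real.norm_eq_abs, abs_of_nonneg h0]
    exact h1

end aux2

noncomputable def auxG (α y : ℝ) : ℝ := ∫ t in (0:ℝ)..y, t ^ (-(2/α)) * Real.exp (-t)

noncomputable def auxg (α c x : ℝ) : ℝ :=
  x^2/2 * (1 - Real.exp (-(c * x ^ (-α)))) - c^(2/α)/2 * auxG α (c * x ^ (-α))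

section aux3
variable {α c : ℝ} (hα : 2 < α) (hc : 0 < c)

include hα hc in
lemma aux_hasDeriv {x : ℝ} (hx : 1 ≤ x) :
    HasDerivAt (auxg α c) ((1 - Real.exp (-c * x ^ (-α))) * x) x := by
  have hx0 : (0:ℝ) < x := by linarith
  have hu0 : 0 < c * x ^ (-α) := mul_pos hc (Real.rpow_pos_of_pos hx0 _)
  -- derivative of u(x) = c * x^(-α)
  have hu : HasDerivAt (fun x : ℝ => c * x ^ (-α)) (c * (-α * x ^ (-α - 1))) x :=
    (Real.hasDerivAt_rpow_const (Or.inl hx0.ne')).const_mul c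
  -- derivative of first term
  have hexp : HasDerivAt (fun x : ℝ => Real.exp (-(c * x ^ (-α))))
      (Real.exp (-(c * x ^ (-α))) * -(c * (-α * x ^ (-α - 1)))) x := hu.neg.exp
  have hsub : HasDerivAt (fun x : ℝ => 1 - Real.exp (-(c * x ^ (-α))))
      (-(Real.exp (-(c * x ^ (-α))) * -(c * (-α * x ^ (-α - 1))))) x := hexp.const_sub 1
  have hpow : HasDerivAt (fun x : ℝ => x^2/2) x x := by
    have := (hasDerivAt_pow 2 x).div_const 2
    simpa using this
  have hm := hpow.mul hsub
  -- derivative of auxG at u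
  have hG : HasDerivAt (auxG α)
      ((c * x ^ (-α)) ^ (-(2/α)) * Real.exp (-(c * x ^ (-α)))) (c * x ^ (-α)) := by
    refine intervalIntegral.integral_hasDerivAt_right (aux_II hα _) ?_ ?_
    · exact (Measurable.aestronglyMeasurable (by fun_prop)).stronglyMeasurableAtFilter
    · exact ((Real.continuousAt_rpow_const _ _ (Or.inl hu0.ne')).mul
        ((Real.continuous_exp.comp continuous_neg).continuousAt))
  have hcomp := (hG.comp x hu).const_mul (c^(2/α)/2)
  have hfinal := hm.sub hcomp
  have hα0 : α ≠ 0 := by positivity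
  have hkey : (c * x ^ (-α)) ^ (-(2/α)) = (c ^ (2/α))⁻¹ * x ^ 2 := by
    rw [Real.mul_rpow hc.le (Real.rpow_nonneg hx0.le _), Real.rpow_neg hc.le,
      ← Real.rpow_mul hx0.le, show -α * -(2/α) = ((2:ℕ):ℝ) by push_cast; field_simp,
      Real.rpow_natCast]
  have hne : c ^ (2/α) ≠ 0 := (Real.rpow_pos_of_pos hc _).ne'
  have hDeq : (1 - Real.exp (-c * x ^ (-α))) * x =
      x * (1 - Real.exp (-(c * x ^ (-α)))) +
        x ^ 2 / 2 * -(Real.exp (-(c * x ^ (-α))) * -(c * (-α * x ^ (-α - 1)))) -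
      c ^ (2/α) / 2 *
        ((c * x ^ (-α)) ^ (-(2/α)) * Real.exp (-(c * x ^ (-α))) * (c * (-α * x ^ (-α - 1)))) := by
    rw [hkey, neg_mul]
    field_simp
    ring
  rw [hDeq]
  exact hfinal
end aux3

section aux4
variable {α c : ℝ} (hα : 2 < α) (hc : 0 < c)

include hα hc in
lemma aux_t1 : Tendsto (fun x : ℝ => x^2/2 * (1 - Real.exp (-(c * x ^ (-α))))) atTop (𝓝 0) := by
  have hlim : Tendsto (fun x : ℝ => c/2 * x ^ (2 - α)) atTop (𝓝 0) := by
    have := (tendsto_rpow_neg_atTop (by linarith : (0:ℝ) < α - 2)).const_mul (c/2)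
    simpa [show ∀ x:ℝ, -(α-2) = 2 - α from fun _ => by ring] using this
  refine squeeze_zero' ?_ ?_ hlim
  · filter_upwards [eventually_ge_atTop (1:ℝ)] with x hx
    have hx0 : (0:ℝ) < x := by linarith
    have h1 : Real.exp (-(c * x ^ (-α))) ≤ 1 := by
      rw [Real.exp_le_one_iff]
      have : 0 < c * x ^ (-α) := mul_pos hc (Real.rpow_pos_of_pos hx0 _)
      linarith
    nlinarith [sq_nonneg x]
  · filter_upwards [eventually_ge_atTop (1:ℝ)] with x hx
    have hx0 : (0:ℝ) < x := by linarith
    have h2 : 1 - Real.exp (-(c * x ^ (-α))) ≤ c * x ^ (-α) := by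
      have := Real.add_one_le_exp (-(c * x ^ (-α)))
      linarith
    have h3 : x^2/2 * (1 - Real.exp (-(c * x ^ (-α)))) ≤ x^2/2 * (c * x ^ (-α)) := by
      have : (0:ℝ) ≤ x^2/2 := by positivity
      nlinarith
    refine h3.trans (le_of_eq ?_)
    rw [← Real.rpow_natCast x 2, show ((2:ℕ):ℝ) = (2:ℝ) by norm_num,
      show (2:ℝ) - α = 2 + -α by ring, Real.rpow_add hx0]
    ring
  
include hα hc in
lemma aux_t2 : Tendsto (fun x : ℝ => c^(2/α)/2 * auxG α (c * x ^ (-α))) atTop (𝓝 0) := by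
  have hp : (0:ℝ) < 1 - 2/α := by
    have : 2/α < 1 := by rw [div_lt_one (by linarith)]; linarith
    linarith
  have hlim : Tendsto (fun x : ℝ => c^(2/α)/2 * (c^(1-2/α) * x ^ (-(α-2)) / (1-2/α)))
      atTop (𝓝 0) := by
    have := ((tendsto_rpow_neg_atTop (by linarith : (0:ℝ) < α - 2)).const_mul
      (c^(1-2/α))).div_const (1-2/α)
    have := this.const_mul (c^(2/α)/2)
    simpa using this
  refine squeeze_zero' ?_ ?_ hlim
  · filter_upwards [eventually_ge_atTop (1:ℝ)] with x hx
    have hx0 : (0:ℝ) < x := by linarith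
    have hu0 : (0:ℝ) ≤ c * x ^ (-α) := (mul_pos hc (Real.rpow_pos_of_pos hx0 _)).le
    have : 0 ≤ auxG α (c * x ^ (-α)) := by
      refine intervalIntegral.integral_nonneg hu0 (fun t ht => ?_)
      exact mul_nonneg (Real.rpow_nonneg ht.1 _) (Real.exp_pos _).le
    positivity
  · filter_upwards [eventually_ge_atTop (1:ℝ)] with x hx
    have hx0 : (0:ℝ) < x := by linarith
    set u := c * x ^ (-α) with hu
    have hu0 : (0:ℝ) ≤ u := (mul_pos hc (Real.rpow_pos_of_pos hx0 _)).le
    have hG : auxG α u ≤ u ^ (1-2/α) / (1-2/α) := by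
      have hmono : auxG α u ≤ ∫ t in (0:ℝ)..u, t ^ (-(2/α)) := by
        refine intervalIntegral.integral_mono_on hu0 (aux_II hα u)
          (intervalIntegral.intervalIntegrable_rpow' (aux_exp_lt hα)) (fun t ht => ?_)
        exact mul_le_of_le_one_right (Real.rpow_nonneg ht.1 _)
          (Real.exp_le_one_iff.mpr (by linarith [ht.1]))
      have hval : ∫ t in (0:ℝ)..u, t ^ (-(2/α)) = u ^ (1-2/α) / (1-2/α) := by
        rw [integral_rpow (Or.inl (aux_exp_lt hα))]
        rw [Real.zero_rpow (by linarith : -(2/α) + 1 ≠ 0)]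
        ring_nf
      rw [← hval]; exact hmono
    have hrw : u ^ (1-2/α) = c^(1-2/α) * x ^ (-(α-2)) := by
      have hα0 : α ≠ 0 := by positivity
      rw [hu, Real.mul_rpow hc.le (Real.rpow_nonneg hx0.le _), ← Real.rpow_mul hx0.le,
        show -α * (1 - 2/α) = -(α-2) by field_simp]
    calc c^(2/α)/2 * auxG α u ≤ c^(2/α)/2 * (u ^ (1-2/α) / (1-2/α)) := by
          have h0 : (0:ℝ) ≤ c^(2/α)/2 := by positivity
          exact mul_le_mul_of_nonneg_left hG h0
      _ = c^(2/α)/2 * (c^(1-2/α) * x ^ (-(α-2)) / (1-2/α)) := by rw [hrw]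

end aux4

section aux5
variable {α c : ℝ} (hα : 2 < α) (hc : 0 < c)

include hα hc in
lemma aux_integral :
    ∫ r in Set.Ioi (1:ℝ), (1 - Real.exp (-c * r ^ (-α))) * r
      = c^(2/α)/2 * auxG α c - (1 - Real.exp (-c))/2 := by
  have htend : Tendsto (auxg α c) atTop (𝓝 (0 - 0)) :=
    (aux_t1 hα hc).sub (aux_t2 hα hc)
  rw [sub_zero] at htend
  have := integral_Ioi_of_hasDerivAt_of_tendsto'
    (fun x hx => aux_hasDeriv hα hc hx) (aux_integrable hα hc) htend
  rw [this]
  have hg1 : auxg α c 1 = (1 - Real.exp (-c))/2 - c^(2/α)/2 * auxG α c := by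
    simp [auxg, Real.one_rpow]
    ring
  rw [hg1]
  ring

end aux5

theorem stmt_2 (α c ρ : ℝ) (hα : 2 < α) (hc : 0 < c) (hρ0 : 0 < ρ) (hρ1 : ρ ≤ 1) :
    MeasureTheory.IntegrableOn (fun r : ℝ => (1 - Real.exp (-c * r ^ (-α))) * r)
      (Set.Ici (1:ℝ)) ∧
    (∫ r in ρ..1, (1 - Real.exp (-c)) * r) +
      (∫ r in Set.Ici (1:ℝ), (1 - Real.exp (-c * r ^ (-α))) * r) =
      (1/2) * (c ^ (2/α) * lowerGamma (1 - 2/α) c - ρ ^ 2 * (1 - Real.exp (-c))) := by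
  have hlg : lowerGamma (1 - 2/α) c = auxG α c := by
    unfold lowerGamma auxG
    congr 1
    ext t
    congr 2
    ring
  constructor
  · exact (integrableOn_Ici_iff_integrableOn_Ioi).mpr (aux_integrable hα hc)
  · rw [MeasureTheory.integral_Ici_eq_integral_Ioi, aux_integral hα hc,
      intervalIntegral.integral_const_mul, integral_id, hlg]
    ring
end

section
/- Fix real numbers P_p > 0, λ_p > 0, σ > 0, λ_s > 0, α > 2 and an integer N ≥ 2. For ρ > 0 set p = exp(−λ_s π ρ²/N) and define E(ρ) = P_p λ_p σ π [ρ²(p − p^N)/(1 − p) + α/(α − 2)] if 0 < ρ ≤ 1 and E(ρ) = P_p λ_p σ π [(α − 2ρ^{2−α})(1 − p^N)/((α − 2)(1 − p)) + 2ρ^{2−α}/(α − 2)] if ρ > 1. Then for every ρ ∈ (0, ∞), E(ρ) > P_p λ_p σ π α/(α − 2). (Corollary 1: the average received power under AD-WPT strictly exceeds that under omnidirectional WPT.) -/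
theorem stmt_8 (Pp lp σ ls α : ℝ) (N : ℕ)
    (hPp : 0 < Pp) (hlp : 0 < lp) (hσ : 0 < σ) (hls : 0 < ls) (hα : 2 < α) (hN : 2 ≤ N) :
    ∀ ρ : ℝ, 0 < ρ →
      (let p : ℝ := Real.exp (-(ls * Real.pi * ρ ^ 2 / N));
        if ρ ≤ 1 then
          Pp * lp * σ * Real.pi * (ρ ^ 2 * (p - p ^ N) / (1 - p) + α / (α - 2))
        else
          Pp * lp * σ * Real.pi *
            ((α - 2 * ρ ^ (2 - α)) * (1 - p ^ N) / ((α - 2) * (1 - p)) +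
              2 * ρ ^ (2 - α) / (α - 2)))
        > Pp * lp * σ * Real.pi * α / (α - 2) := by
  intro ρ hρ
  have hN0 : (0:ℝ) < N := by positivity
  set p : ℝ := Real.exp (-(ls * Real.pi * ρ ^ 2 / N)) with hpdef
  have hc : 0 < ls * Real.pi * ρ ^ 2 / N := by positivity
  have hp0 : 0 < p := Real.exp_pos _
  have hp1 : p < 1 := by
    rw [hpdef, Real.exp_lt_one_iff]; linarith
  have hpN : p ^ N < p := by
    calc p ^ N < p ^ 1 := pow_lt_pow_right_of_lt_one₀ hp0 hp1 (by omega)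
    _ = p := pow_one p
  have h1p : 0 < 1 - p := by linarith
  have hα2 : 0 < α - 2 := by linarith
  have hA : 0 < Pp * lp * σ * Real.pi := by positivity
  simp only []
  split_ifs with hρ1
  · have hX : 0 < ρ ^ 2 * (p - p ^ N) / (1 - p) := by
      apply div_pos (mul_pos (by positivity) (by linarith)) h1p
    have := mul_pos hA hX
    rw [gt_iff_lt, mul_div_assoc]
    have : α / (α - 2) < ρ ^ 2 * (p - p ^ N) / (1 - p) + α / (α - 2) := by linarith
    exact mul_lt_mul_of_pos_left this hA
  · push_neg at hρ1
    set r : ℝ := ρ ^ (2 - α) with hrdef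
    have hr0 : 0 < r := Real.rpow_pos_of_pos hρ _
    have hr1 : r < 1 := Real.rpow_lt_one_of_one_lt_of_neg hρ1 (by linarith)
    have hkey : (α - 2 * r) * (1 - p ^ N) / ((α - 2) * (1 - p)) + 2 * r / (α - 2)
        - α / (α - 2) = (α - 2 * r) * (p - p ^ N) / ((α - 2) * (1 - p)) := by
      field_simp
      ring
    have hpos : 0 < (α - 2 * r) * (p - p ^ N) / ((α - 2) * (1 - p)) := by
      apply div_pos (mul_pos (by linarith) (by linarith)) (mul_pos hα2 h1p)
    rw [gt_iff_lt, mul_div_assoc]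
    have : α / (α - 2) < (α - 2 * r) * (1 - p ^ N) / ((α - 2) * (1 - p)) + 2 * r / (α - 2) := by
      linarith
    exact mul_lt_mul_of_pos_left this hA
end

section
/- Fix real numbers P_p > 0, λ_p > 0, σ > 0, α > 2, an integer N ≥ 2, and a charging radius ρ > 0. With p(λ_s) = exp(−λ_s π ρ²/N), define E(λ_s) = P_p λ_p σ π [ρ²(p − p^N)/(1 − p) + α/(α − 2)] if 0 < ρ ≤ 1 and E(λ_s) = P_p λ_p σ π [(α − 2ρ^{2−α})(1 − p^N)/((α − 2)(1 − p)) + 2ρ^{2−α}/(α − 2)] if ρ > 1, where p = p(λ_s). Then E is strictly decreasing in λ_s on (0, ∞). (Claim following Proposition 2: the average received power decreases with the sensor density.) -/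
lemma geom_aux {p q : ℝ} (hq0 : 0 ≤ q) (hqp : q < p) {N : ℕ} (hN : 2 ≤ N) :
    ∑ i ∈ Finset.range N, q ^ i < ∑ i ∈ Finset.range N, p ^ i := by
  apply Finset.sum_lt_sum
  · exact fun i _ => pow_le_pow_left₀ hq0 hqp.le i
  · exact ⟨1, Finset.mem_range.mpr (by omega), by simpa using hqp⟩

lemma id_one {p : ℝ} (hp : p ≠ 1) (N : ℕ) :
    (p - p ^ N) / (1 - p) = (∑ i ∈ Finset.range N, p ^ i) - 1 := by
  have h1 : p - 1 ≠ 0 := sub_ne_zero.mpr hp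
  have h2 : (1:ℝ) - p ≠ 0 := fun h => h1 (by linarith [sub_eq_zero.mp h])
  rw [geom_sum_eq hp]
  field_simp
  ring

lemma id_two {p : ℝ} (hp : p ≠ 1) (N : ℕ) :
    (1 - p ^ N) / (1 - p) = ∑ i ∈ Finset.range N, p ^ i := by
  rw [geom_sum_eq hp, show (1 - p ^ N) = -(p ^ N - 1) by ring,
    show (1 - p) = -(p - 1) by ring, neg_div_neg_eq]

theorem stmt_11 (Pp lp σ α ρ : ℝ) (N : ℕ)
    (hPp : 0 < Pp) (hlp : 0 < lp) (hσ : 0 < σ) (hα : 2 < α) (hN : 2 ≤ N) (hρ : 0 < ρ) :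
    StrictAntiOn
      (fun ls : ℝ =>
        let p : ℝ := Real.exp (-(ls * Real.pi * ρ ^ 2 / N));
        if ρ ≤ 1 then
          Pp * lp * σ * Real.pi * (ρ ^ 2 * (p - p ^ N) / (1 - p) + α / (α - 2))
        else
          Pp * lp * σ * Real.pi *
            ((α - 2 * ρ ^ (2 - α)) * (1 - p ^ N) / ((α - 2) * (1 - p)) +
              2 * ρ ^ (2 - α) / (α - 2)))
      (Set.Ioi 0) := by
  have hNpos : (0:ℝ) < N := by
    have : 0 < N := by omega
    exact_mod_cast this
  intro x hx y hy hxy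
  simp only [Set.mem_Ioi] at hx hy
  simp only []
  set p := Real.exp (-(x * Real.pi * ρ ^ 2 / N)) with hpdef
  set q := Real.exp (-(y * Real.pi * ρ ^ 2 / N)) with hqdef
  have hq0 : 0 < q := Real.exp_pos _
  have hqp : q < p := by
    apply Real.exp_lt_exp.mpr
    have h : x * Real.pi * ρ ^ 2 / N < y * Real.pi * ρ ^ 2 / N := by
      gcongr
    linarith
  have hp1 : p < 1 := by
    rw [hpdef, Real.exp_lt_one_iff]
    have : 0 < x * Real.pi * ρ ^ 2 / N := by positivity
    linarith
  have hpne : p ≠ 1 := hp1.ne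
  have hqne : q ≠ 1 := (hqp.trans hp1).ne
  have hC : 0 < Pp * lp * σ * Real.pi := by positivity
  have hsum := geom_aux hq0.le hqp hN
  split_ifs with h1
  · have key : (q - q ^ N) / (1 - q) < (p - p ^ N) / (1 - p) := by
      rw [id_one hqne, id_one hpne]
      exact sub_lt_sub_right hsum 1
    have h2 : ρ ^ 2 * (q - q ^ N) / (1 - q) < ρ ^ 2 * (p - p ^ N) / (1 - p) := by
      rw [mul_div_assoc, mul_div_assoc]
      exact mul_lt_mul_of_pos_left key (by positivity)
    exact mul_lt_mul_of_pos_left (by linarith) hC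
  · have hρ1 : 1 < ρ := not_le.mp h1
    have hr1 : ρ ^ (2 - α) < 1 :=
      Real.rpow_lt_one_of_one_lt_of_neg hρ1 (by linarith)
    have hK : 0 < (α - 2 * ρ ^ (2 - α)) / (α - 2) := by
      apply div_pos <;> linarith
    have key : (α - 2 * ρ ^ (2 - α)) * (1 - q ^ N) / ((α - 2) * (1 - q)) <
        (α - 2 * ρ ^ (2 - α)) * (1 - p ^ N) / ((α - 2) * (1 - p)) := by
      rw [mul_div_mul_comm, mul_div_mul_comm, id_two hqne, id_two hpne]
      exact mul_lt_mul_of_pos_left hsum hK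
    exact mul_lt_mul_of_pos_left (by linarith) hC
end

section
/- Fix real numbers P_p > 0, λ_p > 0, σ > 0, λ_s > 0, α > 2, and a charging radius ρ > 0. For each integer N ≥ 1, with p_N = exp(−λ_s π ρ²/N) (so that p_N^N = exp(−λ_s π ρ²) is independent of N), define E(N) = P_p λ_p σ π [ρ²(p_N − p_N^N)/(1 − p_N) + α/(α − 2)] if 0 < ρ ≤ 1 and E(N) = P_p λ_p σ π [(α − 2ρ^{2−α})(1 − p_N^N)/((α − 2)(1 − p_N)) + 2ρ^{2−α}/(α − 2)] if ρ > 1. Then E(N) is strictly increasing in N, i.e., E(N+1) > E(N) for every integer N ≥ 1. (Claim following Proposition 2: the average received power increases with the number of antenna sectors.) -/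
/-!
With `c = λ_s π ρ²` and `p_N = exp (-c / N)` we have `p_N ^ N = exp (-c)`, so `E N` depends on `N`
only through `p_N`, which increases with `N`. In both branches `E` is a positive multiple of
`1 / (1 - p_N)` plus a constant, hence increases with `p_N`.
-/

open Real

lemma exp_neg_div_natCast_pow (c : ℝ) {n : ℕ} (hn : n ≠ 0) :
    exp (-(c / n)) ^ n = exp (-c) := by
  rw [← exp_nat_mul]
  field_simp

lemma sub_div_one_sub_lt_sub_div_one_sub {p p' q : ℝ} (hq : q < 1) (hpp' : p < p')
    (hp' : p' < 1) : (p - q) / (1 - p) < (p' - q) / (1 - p') := by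
  have key : ∀ r, r < 1 → (r - q) / (1 - r) = (1 - q) / (1 - r) - 1 := by
    intro r hr
    field_simp [(sub_pos.2 hr).ne']
    ring
  rw [key p (hpp'.trans hp'), key p' hp']
  gcongr

theorem stmt_12 (Pp lp σ ls α ρ : ℝ)
    (hPp : 0 < Pp) (hlp : 0 < lp) (hσ : 0 < σ) (hls : 0 < ls) (hα : 2 < α) (hρ : 0 < ρ) :
    ∀ N : ℕ, 1 ≤ N →
      (let E : ℕ → ℝ := fun N =>
        let p : ℝ := Real.exp (-(ls * Real.pi * ρ ^ 2 / N));
        if ρ ≤ 1 then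
          Pp * lp * σ * Real.pi * (ρ ^ 2 * (p - p ^ N) / (1 - p) + α / (α - 2))
        else
          Pp * lp * σ * Real.pi *
            ((α - 2 * ρ ^ (2 - α)) * (1 - p ^ N) / ((α - 2) * (1 - p)) +
              2 * ρ ^ (2 - α) / (α - 2));
      E (N + 1) > E N) := by
  intro N hN E
  simp only [E, gt_iff_lt]
  set c := ls * π * ρ ^ 2
  have hc : 0 < c := by positivity
  have hN' : (0 : ℝ) < N := by exact_mod_cast hN
  rw [exp_neg_div_natCast_pow c (Nat.succ_ne_zero N),
    exp_neg_div_natCast_pow c (Nat.one_le_iff_ne_zero.1 hN)]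
  have hp : exp (-(c / N)) < exp (-(c / (N + 1 : ℕ))) := by
    gcongr
    linarith
  have hp1 : exp (-(c / (N + 1 : ℕ))) < 1 := by
    rw [exp_lt_one_iff, neg_lt_zero]
    positivity
  have hq : exp (-c) < 1 := by
    rw [exp_lt_one_iff]
    linarith
  split_ifs with hρ1
  · gcongr _ * (?_ + _)
    rw [mul_div_assoc (ρ ^ 2), mul_div_assoc (ρ ^ 2)]
    exact mul_lt_mul_of_pos_left (sub_div_one_sub_lt_sub_div_one_sub hq hp hp1) (by positivity)
  · have hρα : ρ ^ (2 - α) < 1 := rpow_lt_one_of_one_lt_of_neg (not_le.1 hρ1) (by linarith)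
    have hcoeff : 0 < α - 2 * ρ ^ (2 - α) := by linarith
    gcongr _ * (?_ + _)
    gcongr
end

section
/- Fix real numbers P_p > 0, λ_p > 0, σ > 0, λ_s > 0, α > 2 and an integer N ≥ 2. For ρ > 0 set p = exp(−λ_s π ρ²/N), q = 1 − p, S = Σ_{M=1}^{N} (N/M)² C(N−1, M−1) p^{N−M} q^{M}, and define V(ρ) = λ_p P_p² σ² π [ (α/(α−1) − ρ²) p^N + ((p/q) ρ² + α/(α−1)) S ] if 0 < ρ ≤ 1 and V(ρ) = λ_p P_p² σ² π [ ρ^{2−2α} p^N/(α−1) + ((α − ρ^{2−2α})/((α−1) q) + ρ^{2−2α}/(α−1)) S ] if ρ > 1. Then for every ρ ∈ (0, ∞), V(ρ) > λ_p P_p² σ² π α/(α−1). (Corollary 3: the variance of the received power under AD-WPT strictly exceeds that under omnidirectional WPT.) -/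
/-!
Since `(N/M)² C(N-1, M-1) = (N/M) C(N, M) ≥ C(N, M)`, with strict inequality at `M = 1`, the sum `S`
strictly exceeds the binomial tail `Σ_{M ≥ 1} C(N, M) p^{N-M} q^M = 1 - p^N`. Replacing `S` by
`1 - p^N` in either branch of `V(ρ) / (λ_p P_p² σ² π)` leaves `α/(α-1)` plus a nonnegative
remainder: `ρ² (p/q (1 - p^N) - p^N) = ρ² (p + ⋯ + p^{N-1})` for `ρ ≤ 1`, and
`(α - t)(p - p^N) / ((α-1) q)` with `t = ρ^{2-2α} < 1` for `ρ > 1`.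
-/

open Finset

theorem div_sq_mul_choose_pred (N M : ℕ) :
    ((N : ℝ) / M) ^ 2 * (N - 1).choose (M - 1) = (N / M) * N.choose M := by
  rcases M with _ | m
  · simp
  rcases N with _ | n
  · simp
  have hm : ((m + 1 : ℕ) : ℝ) ≠ 0 := by positivity
  have hchoose : ((n + 1 : ℕ) : ℝ) * n.choose m = (n + 1).choose (m + 1) * (m + 1 : ℕ) := by
    exact_mod_cast Nat.add_one_mul_choose_eq n m
  calc _ = ((n + 1 : ℕ) : ℝ) / (m + 1 : ℕ) * ((n + 1 : ℕ) * n.choose m / (m + 1 : ℕ)) := by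
        simp only [Nat.add_sub_cancel]; ring
    _ = _ := by rw [hchoose, mul_div_cancel_right₀ _ hm]

theorem sum_Icc_choose_mul_pow {R : Type*} [CommRing R] (p q : R) (N : ℕ) :
    ∑ M ∈ Icc 1 N, (N.choose M : R) * p ^ (N - M) * q ^ M = (q + p) ^ N - p ^ N := by
  rw [add_pow, range_eq_Ico, sum_eq_sum_Ico_succ_bot (by omega : 0 < N + 1),
    Ico_add_one_right_eq_Icc]
  simp only [pow_zero, Nat.sub_zero, Nat.choose_zero_right, Nat.cast_one, one_mul, mul_one,
    zero_add, add_sub_cancel_left]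
  exact sum_congr rfl fun M _ => by ring

/-- The sum `S` of the variance formula, with `q = 1 - p`. -/
noncomputable def sectorSum (N : ℕ) (p : ℝ) : ℝ :=
  ∑ M ∈ Icc 1 N, ((N : ℝ) / M) ^ 2 * (N - 1).choose (M - 1) * p ^ (N - M) * (1 - p) ^ M

theorem one_sub_pow_lt_sectorSum {N : ℕ} {p : ℝ} (hN : 2 ≤ N) (hp0 : 0 < p) (hp1 : p < 1) :
    1 - p ^ N < sectorSum N p := by
  have hq : 0 < 1 - p := sub_pos.mpr hp1
  have hterm : ∀ M ∈ Icc 1 N, ((N : ℝ) / M) ^ 2 * (N - 1).choose (M - 1) * p ^ (N - M) * (1 - p) ^ M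
      = (N / M) * ((N.choose M : ℝ) * p ^ (N - M) * (1 - p) ^ M) := fun M _ => by
    rw [div_sq_mul_choose_pred]; ring
  calc 1 - p ^ N = ∑ M ∈ Icc 1 N, (N.choose M : ℝ) * p ^ (N - M) * (1 - p) ^ M := by
        rw [sum_Icc_choose_mul_pow, sub_add_cancel, one_pow]
    _ < sectorSum N p := by
      rw [sectorSum, sum_congr rfl hterm]
      refine sum_lt_sum (fun M hM => le_mul_of_one_le_left (by positivity) ?_) ⟨1, ?_, ?_⟩
      · rw [mem_Icc] at hM
        rw [one_le_div₀ (by exact_mod_cast hM.1)]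
        exact_mod_cast hM.2
      · exact mem_Icc.mpr ⟨le_rfl, by omega⟩
      · rw [Nat.choose_one_right, Nat.cast_one, div_one]
        refine lt_mul_of_one_lt_left (by positivity) ?_
        exact_mod_cast hN

section Branches

variable {α p S : ℝ} {N : ℕ}

theorem smallRadius_bracket_gt (r : ℝ) (hα : 1 < α) (hN : N ≠ 0) (hp0 : 0 < p) (hp1 : p < 1)
    (hS : 1 - p ^ N < S) :
    α / (α - 1) < (α / (α - 1) - r ^ 2) * p ^ N + (p / (1 - p) * r ^ 2 + α / (α - 1)) * S := by
  have hq : 0 < 1 - p := sub_pos.mpr hp1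
  have hα1 : 0 < α - 1 := sub_pos.mpr hα
  have hC : 0 < p / (1 - p) * r ^ 2 + α / (α - 1) := by positivity
  have hgap : p ^ N ≤ p / (1 - p) * (1 - p ^ N) := by
    have hpN : p ^ N ≤ p := pow_le_of_le_one hp0.le hp1.le hN
    rw [div_mul_eq_mul_div, le_div_iff₀ hq]
    nlinarith
  calc α / (α - 1) ≤ α / (α - 1) + r ^ 2 * (p / (1 - p) * (1 - p ^ N) - p ^ N) :=
        le_add_of_nonneg_right (mul_nonneg (sq_nonneg r) (sub_nonneg.mpr hgap))
    _ = (α / (α - 1) - r ^ 2) * p ^ N + (p / (1 - p) * r ^ 2 + α / (α - 1)) * (1 - p ^ N) := by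
        ring
    _ < _ := add_lt_add_right (mul_lt_mul_of_pos_left hS hC) _

theorem largeRadius_bracket_gt {t : ℝ} (hα : 1 < α) (ht : t ≤ α) (hN : N ≠ 0) (hp0 : 0 < p)
    (hp1 : p < 1) (hS : 1 - p ^ N < S) :
    α / (α - 1) < t * p ^ N / (α - 1) + ((α - t) / ((α - 1) * (1 - p)) + t / (α - 1)) * S := by
  have hq : 0 < 1 - p := sub_pos.mpr hp1
  have hα1 : 0 < α - 1 := sub_pos.mpr hα
  have hC : 0 < (α - t) / ((α - 1) * (1 - p)) + t / (α - 1) := by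
    have hnum : 0 < (α - t) * p + α * (1 - p) := by
      nlinarith [mul_nonneg (sub_nonneg.mpr ht) hp0.le, mul_pos (by linarith : (0:ℝ) < α) hq]
    calc (0 : ℝ) < ((α - t) * p + α * (1 - p)) / ((α - 1) * (1 - p)) := by positivity
      _ = _ := by field_simp; ring
  have hgap : 0 ≤ (α - t) * (p - p ^ N) / ((α - 1) * (1 - p)) :=
    div_nonneg (mul_nonneg (sub_nonneg.mpr ht) (sub_nonneg.mpr (pow_le_of_le_one hp0.le hp1.le hN)))
      (by positivity)
  calc α / (α - 1) ≤ α / (α - 1) + (α - t) * (p - p ^ N) / ((α - 1) * (1 - p)) :=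
        le_add_of_nonneg_right hgap
    _ = t * p ^ N / (α - 1) + ((α - t) / ((α - 1) * (1 - p)) + t / (α - 1)) * (1 - p ^ N) := by
        field_simp; ring
    _ < _ := add_lt_add_right (mul_lt_mul_of_pos_left hS hC) _

end Branches

theorem stmt_13 (Pp lp σ ls α : ℝ) (N : ℕ)
    (hPp : 0 < Pp) (hlp : 0 < lp) (hσ : 0 < σ) (hls : 0 < ls) (hα : 2 < α) (hN : 2 ≤ N) :
    ∀ ρ : ℝ, 0 < ρ →
      (let p : ℝ := Real.exp (-(ls * Real.pi * ρ ^ 2 / N));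
       let q : ℝ := 1 - p;
       let S : ℝ := ∑ M ∈ Finset.Icc 1 N,
          ((N : ℝ) / (M : ℝ)) ^ 2 * (Nat.choose (N - 1) (M - 1) : ℝ) * p ^ (N - M) * q ^ M;
        if ρ ≤ 1 then
          lp * Pp ^ 2 * σ ^ 2 * Real.pi *
            ((α / (α - 1) - ρ ^ 2) * p ^ N + ((p / q) * ρ ^ 2 + α / (α - 1)) * S)
        else
          lp * Pp ^ 2 * σ ^ 2 * Real.pi *
            (ρ ^ (2 - 2 * α) * p ^ N / (α - 1) +
              ((α - ρ ^ (2 - 2 * α)) / ((α - 1) * q) + ρ ^ (2 - 2 * α) / (α - 1)) * S))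
        > lp * Pp ^ 2 * σ ^ 2 * Real.pi * α / (α - 1) := by
  intro ρ hρ
  set p := Real.exp (-(ls * Real.pi * ρ ^ 2 / N))
  dsimp only
  rw [← sectorSum]
  have hp0 : 0 < p := Real.exp_pos _
  have hp1 : p < 1 := Real.exp_lt_one_iff.mpr (neg_neg_of_pos (by positivity))
  have hS : 1 - p ^ N < sectorSum N p := one_sub_pow_lt_sectorSum hN hp0 hp1
  have hK : 0 < lp * Pp ^ 2 * σ ^ 2 * Real.pi := by positivity
  have hα1 : 1 < α := by linarith
  have hN0 : N ≠ 0 := by omega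
  rw [gt_iff_lt, mul_div_assoc]
  split_ifs with hρ1
  · exact mul_lt_mul_of_pos_left (smallRadius_bracket_gt ρ hα1 hN0 hp0 hp1 hS) hK
  · have ht : ρ ^ (2 - 2 * α) ≤ α :=
      (Real.rpow_lt_one_of_one_lt_of_neg (not_le.mp hρ1) (by linarith)).le.trans hα1.le
    exact mul_lt_mul_of_pos_left (largeRadius_bracket_gt hα1 ht hN0 hp0 hp1 hS) hK
end

section
/- Fix real numbers P_p > 0, λ_p > 0, σ > 0, λ_s > 0, α > 2 and an integer N ≥ 2. With p(ρ) = exp(−λ_s π ρ²/N), q(ρ) = 1 − p(ρ), and S(ρ) = Σ_{M=1}^{N} (N/M)² C(N−1, M−1) p(ρ)^{N−M} q(ρ)^{M}, the function ρ ↦ λ_p P_p² σ² π [ (α/(α−1) − ρ²) p(ρ)^N + ((p(ρ)/q(ρ)) ρ² + α/(α−1)) S(ρ) ] tends to λ_p P_p² σ² π α/(α−1) as ρ → 0⁺. (Part of Corollary 3: the AD-WPT received-power variance converges to the omnidirectional value as the charging radius vanishes.) -/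
theorem stmt_15 (Pp lp σ ls α : ℝ) (N : ℕ)
    (hPp : 0 < Pp) (hlp : 0 < lp) (hσ : 0 < σ) (hls : 0 < ls) (hα : 2 < α) (hN : 2 ≤ N) :
    Filter.Tendsto
      (fun ρ : ℝ =>
        let p : ℝ := Real.exp (-(ls * Real.pi * ρ ^ 2 / N));
        let q : ℝ := 1 - p;
        let S : ℝ := ∑ M ∈ Finset.Icc 1 N,
          ((N : ℝ) / (M : ℝ)) ^ 2 * (Nat.choose (N - 1) (M - 1) : ℝ) * p ^ (N - M) * q ^ M;
        lp * Pp ^ 2 * σ ^ 2 * Real.pi *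
          ((α / (α - 1) - ρ ^ 2) * p ^ N + ((p / q) * ρ ^ 2 + α / (α - 1)) * S))
      (nhdsWithin 0 (Set.Ioi 0))
      (nhds (lp * Pp ^ 2 * σ ^ 2 * Real.pi * α / (α - 1))) := by
  have hN0 : (0:ℝ) < N := by positivity
  set g : ℝ → ℝ := fun ρ =>
    lp * Pp ^ 2 * σ ^ 2 * Real.pi *
      ((α / (α - 1) - ρ ^ 2) * (Real.exp (-(ls * Real.pi * ρ ^ 2 / N))) ^ N +
        (ρ ^ 2 * ∑ M ∈ Finset.Icc 1 N,
            ((N : ℝ) / (M : ℝ)) ^ 2 * (Nat.choose (N - 1) (M - 1) : ℝ) *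
              (Real.exp (-(ls * Real.pi * ρ ^ 2 / N))) ^ (N - M + 1) *
              (1 - Real.exp (-(ls * Real.pi * ρ ^ 2 / N))) ^ (M - 1)
          + α / (α - 1) * ∑ M ∈ Finset.Icc 1 N,
            ((N : ℝ) / (M : ℝ)) ^ 2 * (Nat.choose (N - 1) (M - 1) : ℝ) *
              (Real.exp (-(ls * Real.pi * ρ ^ 2 / N))) ^ (N - M) *
              (1 - Real.exp (-(ls * Real.pi * ρ ^ 2 / N))) ^ M)) with hg
  have hcont : Continuous g := by
    apply Continuous.mul continuous_const
    apply Continuous.add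
    · fun_prop
    · apply Continuous.add
      · apply Continuous.mul (by fun_prop)
        apply continuous_finset_sum
        intro M _
        fun_prop
      · apply Continuous.mul continuous_const
        apply continuous_finset_sum
        intro M _
        fun_prop
  have hgt : Filter.Tendsto g (nhdsWithin 0 (Set.Ioi 0)) (nhds (g 0)) :=
    (hcont.tendsto 0).mono_left nhdsWithin_le_nhds
  have hg0 : g 0 = lp * Pp ^ 2 * σ ^ 2 * Real.pi * α / (α - 1) := by
    have h1 : ∀ M ∈ Finset.Icc 1 N,
        ((N : ℝ) / (M : ℝ)) ^ 2 * (Nat.choose (N - 1) (M - 1) : ℝ) *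
          (Real.exp (-(ls * Real.pi * (0:ℝ) ^ 2 / N))) ^ (N - M) *
          (1 - Real.exp (-(ls * Real.pi * (0:ℝ) ^ 2 / N))) ^ M = 0 := by
      intro M hM
      have hM1 : 1 ≤ M := (Finset.mem_Icc.mp hM).1
      simp [zero_pow (by omega : M ≠ 0)]
    rw [hg]
    simp only
    rw [Finset.sum_eq_zero h1]
    simp
    ring
  rw [← hg0]
  apply Filter.Tendsto.congr' _ hgt
  filter_upwards [self_mem_nhdsWithin] with ρ hρ
  have hρ0 : (0:ℝ) < ρ := hρ
  have hp1 : Real.exp (-(ls * Real.pi * ρ ^ 2 / N)) < 1 := by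
    rw [Real.exp_lt_one_iff]
    have : 0 < ls * Real.pi * ρ ^ 2 / N := by positivity
    linarith
  set p := Real.exp (-(ls * Real.pi * ρ ^ 2 / N)) with hp
  have hq0 : 1 - p ≠ 0 := by linarith
  rw [hg]
  simp only
  have key : (p / (1 - p)) * ρ ^ 2 *
      (∑ M ∈ Finset.Icc 1 N,
        ((N : ℝ) / (M : ℝ)) ^ 2 * (Nat.choose (N - 1) (M - 1) : ℝ) * p ^ (N - M) * (1 - p) ^ M)
      = ρ ^ 2 * ∑ M ∈ Finset.Icc 1 N,
        ((N : ℝ) / (M : ℝ)) ^ 2 * (Nat.choose (N - 1) (M - 1) : ℝ) * p ^ (N - M + 1) *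
          (1 - p) ^ (M - 1) := by
    rw [Finset.mul_sum, Finset.mul_sum]
    apply Finset.sum_congr rfl
    intro M hM
    have hM1 : 1 ≤ M := (Finset.mem_Icc.mp hM).1
    have h2 : (1 - p) ^ M = (1 - p) ^ (M - 1) * (1 - p) := by
      rw [← pow_succ]; congr 1; omega
    have h3 : p ^ (N - M + 1) = p ^ (N - M) * p := pow_succ _ _
    rw [h2, h3]
    field_simp
  linear_combination (-(lp * Pp ^ 2 * σ ^ 2 * Real.pi)) * key
end
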